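/- arXiv:1412.2068 — 3 statements merged into one kernel-verified Lean document; each statement's English description precedes it below -/
import Mathlib

section
/- Let N ≥ 1 be an integer and let Ω ⊂ ℝ^N be a bounded open set with boundary ∂Ω. Write d(x) = dist(x, ∂Ω) and, for ε > 0, S^ε = {x ∈ Ω : d(x) < ε}. Let ε̂ > 0 and assume: (a) d is twice continuously differentiable on S^ε̂ with ‖∇d(x)‖ = 1 there, and there is L > 0 with |Δd(x)| ≤ L for all x ∈ S^ε̂; (b) ρ : Ω → ℝ is continuous with ρ(x) > 0 for all x ∈ Ω; (c) there is a continuous function ρ̄ : (0, ε̂] → ℝ with ρ̄ > 0, ρ(x) ≤ ρ̄(d(x)) for all x ∈ S^ε̂, and ∫₀^ε̂ η ρ̄(η) dη < ∞. Then there exist ε ∈ (0, ε̂) and a twice continuously differentiable function V on S^ε such that ΔV(x) ≤ −ρ(x) for all x ∈ S^ε, V(x) > 0 for all x ∈ S^ε, and V(x) → 0 as d(x) → 0 (i.e. for every σ > 0 there is δ > 0 such that x ∈ S^ε and d(x) < δ imply V(x) < σ). -/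
/-!
Take `V = ψ ∘ d` for a profile `ψ` on `(0, ε)` with `ψ' > 0` and `ψ'' + L ψ' = -ρbar`. Since
`‖∇d‖ = 1` and `|Δd| ≤ L`, the chain rule gives
`ΔV = ψ''(d) + ψ'(d) Δd ≤ ψ''(d) + L ψ'(d) = -ρbar(d) ≤ -ρ`.
The profile is `ψ t = ∫₀ᵗ u`, where `u s = ∫ₛ^ε e^{L(r-s)} ρbar r dr` solves `u' = -L u - ρbar`.
Integrating by parts, `∫ₐ^ε ∫ₛ^ε g r dr ds ≤ ∫ₐ^ε r g r dr` for `g ≥ 0`, so the integrability of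
`η ρbar(η)` at `0` makes `u` integrable at `0`; hence `ψ` is positive and tends to `0` at `0`.
-/

open MeasureTheory Set

/-- The Laplacian of `f : ℝ^N → ℝ`: the sum of the second partial derivatives. -/
noncomputable def euclidLaplacian {N : ℕ} (f : EuclideanSpace ℝ (Fin N) → ℝ)
    (x : EuclideanSpace ℝ (Fin N)) : ℝ :=
  ∑ i : Fin N,
    fderiv ℝ (fun y => fderiv ℝ f y (EuclideanSpace.single i 1)) x (EuclideanSpace.single i 1)

open Filter Topology intervalIntegral

theorem hasDerivAt_intervalIntegral_left_of_continuousOn {f : ℝ → ℝ} {a b s : ℝ}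
    (hf : ContinuousOn f (Ioc a b)) (hs : s ∈ Ioo a b) :
    HasDerivAt (fun t => ∫ r in t..b, f r) (-f s) s := by
  refine integral_hasDerivAt_left ?_
    ((hf.mono Ioo_subset_Ioc_self).stronglyMeasurableAtFilter isOpen_Ioo s hs)
    (hf.continuousAt (Ioc_mem_nhds hs.1 hs.2))
  exact (hf.mono fun r hr => ⟨hs.1.trans_le hr.1, hr.2⟩).intervalIntegrable_of_Icc hs.2.le

theorem integrableOn_Ioc_intervalIntegral_of_integrableOn_mul {f : ℝ → ℝ} {b : ℝ}
    (hf : ContinuousOn f (Ioc 0 b)) (hf0 : ∀ r ∈ Ioc 0 b, 0 ≤ f r)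
    (hint : IntegrableOn (fun r => r * f r) (Ioc 0 b)) :
    IntegrableOn (fun s => ∫ r in s..b, f r) (Ioc 0 b) := by
  rcases le_or_gt b 0 with hb | hb
  · simp [Ioc_eq_empty_of_le hb]
  set G : ℝ → ℝ := fun s => ∫ r in s..b, f r
  have hIcc : ∀ {a}, 0 < a → Icc a b ⊆ Ioc 0 b := fun ha _ hr => ⟨ha.trans_le hr.1, hr.2⟩
  have hG_cont : ∀ {a}, 0 < a → a ≤ b → ContinuousOn G (Icc a b) := fun ha hab => by
    simpa only [uIcc_of_le hab] using continuousOn_primitive_interval_left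
      ((hf.mono (hIcc ha)).integrableOn_Icc.mono_set (uIcc_of_le hab).subset)
  have hG_nonneg : ∀ {a}, 0 < a → a ≤ b → 0 ≤ G a := fun ha hab =>
    integral_nonneg hab fun r hr => hf0 r (hIcc ha hr)
  have hbound : ∀ {a}, 0 < a → a ≤ b → ∫ s in a..b, G s ≤ ∫ r in Ioc 0 b, r * f r := by
    intro a ha hab
    have hparts : ∫ s in a..b, s * -f s = b * G b - a * G a - ∫ s in a..b, 1 * G s := by
      refine integral_mul_deriv_eq_deriv_mul_of_hasDerivAt continuousOn_id
        (hG_cont ha hab |>.mono ?_) (fun s _ => hasDerivAt_id s) ?_ intervalIntegrable_const ?_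
      · rw [uIcc_of_le hab]
      · rw [min_eq_left hab, max_eq_right hab]
        exact fun s hs => hasDerivAt_intervalIntegral_left_of_continuousOn hf
          ⟨ha.trans hs.1, hs.2⟩
      · exact ((hf.mono (hIcc ha)).neg.intervalIntegrable_of_Icc hab)
    have hrf : ∫ s in a..b, s * f s ≤ ∫ r in Ioc 0 b, r * f r := by
      rw [integral_of_le hab]
      exact setIntegral_mono_set hint
        (ae_restrict_of_forall_mem measurableSet_Ioc fun r hr => mul_nonneg hr.1.le (hf0 r hr))
        (Ioc_subset_Ioc_left ha.le).eventuallyLE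
    simp only [mul_neg, intervalIntegral.integral_neg, one_mul, G, integral_same,
      mul_zero] at hparts
    nlinarith [hG_nonneg ha hab]
  have ha : ∀ n : ℕ, 0 < b / (n + 1) ∧ b / (n + 1) ≤ b := fun n =>
    ⟨by positivity, div_le_self hb.le (by linarith [n.cast_nonneg (α := ℝ)])⟩
  refine integrableOn_Ioc_of_intervalIntegral_norm_bounded_left (l := atTop)
    (a := fun n : ℕ => b / (n + 1)) (I := ∫ r in Ioc 0 b, r * f r)
    (fun n => (hG_cont (ha n).1 (ha n).2).integrableOn_Icc.mono_set Ioc_subset_Icc_self) ?_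
    (Eventually.of_forall fun n => ?_)
  · simpa [div_eq_mul_inv] using tendsto_one_div_add_atTop_nhds_zero_nat.const_mul b
  · refine le_of_eq_of_le ?_ (hbound (ha n).1 (ha n).2)
    rw [integral_of_le (ha n).2]
    refine setIntegral_congr_fun measurableSet_Ioc fun s hs => ?_
    exact Real.norm_of_nonneg (hG_nonneg ((ha n).1.trans hs.1) hs.2)

theorem ContDiffOn.succ_of_hasDerivAt {𝕜 F : Type*} [NontriviallyNormedField 𝕜]
    [NormedAddCommGroup F] [NormedSpace 𝕜 F] {U : Set 𝕜} (hU : IsOpen U) {φ φ' : 𝕜 → F}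
    {n : ℕ} (hφ' : ContDiffOn 𝕜 n φ' U) (hφ : ∀ t ∈ U, HasDerivAt φ (φ' t) t) :
    ContDiffOn 𝕜 (n + 1) φ U := by
  rw [contDiffOn_succ_iff_deriv_of_isOpen hU]
  refine ⟨fun t ht => (hφ t ht).differentiableAt.differentiableWithinAt, by simp, ?_⟩
  exact hφ'.congr fun t ht => (hφ t ht).deriv

noncomputable def dampedTail (L b : ℝ) (f : ℝ → ℝ) (s : ℝ) : ℝ :=
  Real.exp (-(L * s)) * ∫ r in s..b, Real.exp (L * r) * f r

section dampedTail

variable {L a b s : ℝ} {f : ℝ → ℝ}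

theorem hasDerivAt_dampedTail (hf : ContinuousOn f (Ioc a b)) (hs : s ∈ Ioo a b) :
    HasDerivAt (dampedTail L b f) (-(L * dampedTail L b f s) - f s) s := by
  have hexp : HasDerivAt (fun s => Real.exp (-(L * s))) (Real.exp (-(L * s)) * -L) s := by
    simpa using ((hasDerivAt_id s).const_mul L).neg.exp
  have htail := hasDerivAt_intervalIntegral_left_of_continuousOn
    (f := fun r => Real.exp (L * r) * f r) ((by fun_prop : Continuous _).continuousOn.mul hf) hs
  have hinv : Real.exp (-(L * s)) * Real.exp (L * s) = 1 := by
    rw [← Real.exp_add, neg_add_cancel, Real.exp_zero]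
  refine (hexp.mul htail).congr_deriv ?_
  unfold dampedTail
  linear_combination -f s * hinv

theorem dampedTail_pos (hf : ContinuousOn f (Ioc a b)) (hpos : ∀ r ∈ Ioc a b, 0 < f r)
    (hs : s ∈ Ioo a b) : 0 < dampedTail L b f s := by
  refine mul_pos (Real.exp_pos _) (intervalIntegral_pos_of_pos_on ?_
    (fun r hr => mul_pos (Real.exp_pos _) (hpos r ⟨hs.1.trans hr.1, hr.2.le⟩)) hs.2)
  exact ((by fun_prop : Continuous fun r => Real.exp (L * r)).continuousOn.mul
    (hf.mono fun r hr => ⟨hs.1.trans_le hr.1, hr.2⟩)).intervalIntegrable_of_Icc hs.2.le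

theorem integrableOn_dampedTail (hf : ContinuousOn f (Ioc 0 b)) (hf0 : ∀ r ∈ Ioc 0 b, 0 ≤ f r)
    (hint : IntegrableOn (fun r => r * f r) (Ioc 0 b)) :
    IntegrableOn (dampedTail L b f) (Ioc 0 b) := by
  have hexp : ∀ c : ℝ, Continuous fun r => Real.exp (c * r) := by fun_prop
  have hweighted : IntegrableOn (fun r => r * (Real.exp (L * r) * f r)) (Ioc 0 b) := by
    refine (IntegrableOn.continuousOn_mul_of_subset (hexp L).continuousOn hint isCompact_Icc
      measurableSet_Ioc Ioc_subset_Icc_self).congr_fun (fun r _ => ?_) measurableSet_Ioc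
    ring
  exact IntegrableOn.continuousOn_mul_of_subset (hexp (-L)).continuousOn
    (integrableOn_Ioc_intervalIntegral_of_integrableOn_mul ((hexp L).continuousOn.mul hf)
      (fun r hr => mul_nonneg (Real.exp_pos _).le (hf0 r hr)) hweighted)
    isCompact_Icc measurableSet_Ioc Ioc_subset_Icc_self |>.congr_fun
    (fun r _ => by simp [dampedTail, neg_mul]) measurableSet_Ioc

end dampedTail

theorem exists_barrier_profile (L : ℝ) {ε : ℝ} (hε : 0 < ε) {f : ℝ → ℝ}
    (hf : ContinuousOn f (Ioc 0 ε)) (hpos : ∀ r ∈ Ioc 0 ε, 0 < f r)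
    (hint : IntegrableOn (fun r => r * f r) (Ioc 0 ε)) :
    ∃ ψ ψ' : ℝ → ℝ, ContDiffOn ℝ 2 ψ (Ioo 0 ε) ∧
      (∀ t ∈ Ioo 0 ε, HasDerivAt ψ (ψ' t) t ∧ HasDerivAt ψ' (-(L * ψ' t) - f t) t ∧
        0 < ψ' t ∧ 0 < ψ t) ∧
      Tendsto ψ (𝓝[>] 0) (𝓝 0) := by
  set u := dampedTail L ε f
  have hu_int : IntegrableOn u (Ioc 0 ε) :=
    integrableOn_dampedTail hf (fun r hr => (hpos r hr).le) hint
  have hu_ii : ∀ {t}, 0 ≤ t → t ≤ ε → IntervalIntegrable u volume 0 t := fun ht htε =>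
    (intervalIntegrable_iff_integrableOn_Ioc_of_le ht).2
      (hu_int.mono_set (Ioc_subset_Ioc_right htε))
  have hu' : ∀ t ∈ Ioo 0 ε, HasDerivAt u (-(L * u t) - f t) t := fun t ht =>
    hasDerivAt_dampedTail hf ht
  have hu_cont : ContinuousOn u (Ioo 0 ε) := fun t ht =>
    (hu' t ht).continuousAt.continuousWithinAt
  have hψ : ∀ t ∈ Ioo 0 ε, HasDerivAt (fun t => ∫ s in 0..t, u s) (u t) t := fun t ht =>
    integral_hasDerivAt_right (hu_ii ht.1.le ht.2.le)
      (hu_cont.stronglyMeasurableAtFilter isOpen_Ioo t ht)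
      (hu_cont.continuousAt (Ioo_mem_nhds ht.1 ht.2))
  have hu''_cont : ContinuousOn (fun t => -(L * u t) - f t) (Ioo 0 ε) :=
    (continuousOn_const.mul hu_cont).neg.sub (hf.mono Ioo_subset_Ioc_self)
  refine ⟨fun t => ∫ s in 0..t, u s, u, ?_, fun t ht => ⟨hψ t ht, hu' t ht,
    dampedTail_pos hf hpos ht, ?_⟩, ?_⟩
  · exact ((contDiffOn_zero.2 hu''_cont).succ_of_hasDerivAt isOpen_Ioo hu').succ_of_hasDerivAt
      isOpen_Ioo hψ
  · exact intervalIntegral_pos_of_pos_on (hu_ii ht.1.le ht.2.le)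
      (fun s hs => dampedTail_pos hf hpos ⟨hs.1, hs.2.trans ht.2⟩) ht.1
  · have := (continuousOn_primitive_interval' (hu_ii hε.le le_rfl) left_mem_uIcc 0
      left_mem_uIcc).mono (uIcc_of_le hε.le ▸ Ioo_subset_Icc_self)
    rwa [ContinuousWithinAt, nhdsWithin_Ioo_eq_nhdsGT hε, integral_same] at this

theorem fderiv_fderiv_comp_apply {E : Type*} [NormedAddCommGroup E] [NormedSpace ℝ E]
    {d : E → ℝ} {s : Set E} (hs : IsOpen s) (hd : ContDiffOn ℝ 2 d s) {ψ ψ' : ℝ → ℝ}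
    (hψ : ∀ y ∈ s, HasDerivAt ψ (ψ' (d y)) (d y)) {x : E} (hx : x ∈ s) {b : ℝ}
    (hb : HasDerivAt ψ' b (d x)) (v : E) :
    fderiv ℝ (fun y => fderiv ℝ (ψ ∘ d) y v) x v =
      b * fderiv ℝ d x v ^ 2 + ψ' (d x) * fderiv ℝ (fun y => fderiv ℝ d y v) x v := by
  have hdiff : ∀ y ∈ s, DifferentiableAt ℝ d y := fun y hy =>
    (hd.contDiffAt (hs.mem_nhds hy)).differentiableAt (by norm_num)
  have hfirst : (fun y => fderiv ℝ (ψ ∘ d) y v) =ᶠ[𝓝 x] fun y => ψ' (d y) * fderiv ℝ d y v := by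
    filter_upwards [hs.mem_nhds hx] with y hy
    rw [((hψ y hy).comp_hasFDerivAt y (hdiff y hy).hasFDerivAt).fderiv]
    rfl
  have hdv : DifferentiableAt ℝ (fun y => fderiv ℝ d y v) x :=
    (((hd.contDiffAt (hs.mem_nhds hx)).fderiv_right (m := 1) le_rfl).differentiableAt
      one_ne_zero).clm_apply (differentiableAt_const v)
  have hprod : HasFDerivAt (fun y => ψ' (d y) * fderiv ℝ d y v)
      (ψ' (d x) • fderiv ℝ (fun y => fderiv ℝ d y v) x + fderiv ℝ d x v • b • fderiv ℝ d x) x :=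
    (hb.comp_hasFDerivAt x (hdiff x hx).hasFDerivAt).mul hdv.hasFDerivAt
  rw [hfirst.fderiv_eq, hprod.fderiv]
  simp only [add_apply, smul_apply, smul_eq_mul]
  ring

theorem fderiv_apply_single_eq_gradient {N : ℕ} (f : EuclideanSpace ℝ (Fin N) → ℝ)
    (x : EuclideanSpace ℝ (Fin N)) (i : Fin N) :
    fderiv ℝ f x (EuclideanSpace.single i 1) = gradient f x i := by
  rw [← inner_gradient_left, EuclideanSpace.inner_single_right]
  simp

theorem euclidLaplacian_comp {N : ℕ} {d : EuclideanSpace ℝ (Fin N) → ℝ}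
    {s : Set (EuclideanSpace ℝ (Fin N))} (hs : IsOpen s) (hd : ContDiffOn ℝ 2 d s)
    {ψ ψ' : ℝ → ℝ} (hψ : ∀ y ∈ s, HasDerivAt ψ (ψ' (d y)) (d y))
    {x : EuclideanSpace ℝ (Fin N)} (hx : x ∈ s) {b : ℝ} (hb : HasDerivAt ψ' b (d x)) :
    euclidLaplacian (ψ ∘ d) x = b * ‖gradient d x‖ ^ 2 + ψ' (d x) * euclidLaplacian d x := by
  simp only [euclidLaplacian, fderiv_fderiv_comp_apply hs hd hψ hx hb,
    fderiv_apply_single_eq_gradient d x]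
  rw [Finset.sum_add_distrib, ← Finset.mul_sum, ← Finset.mul_sum, EuclideanSpace.real_norm_sq_eq]

theorem IsOpen.infDist_frontier_pos {E : Type*} [PseudoMetricSpace E] {Ω : Set E}
    (hΩ : IsOpen Ω) (hne : (frontier Ω).Nonempty) {x : E} (hx : x ∈ Ω) :
    0 < Metric.infDist x (frontier Ω) :=
  (isClosed_frontier.notMem_iff_infDist_pos hne).1 fun h => (hΩ.frontier_eq ▸ h).2 hx

theorem stmt_0_general (N : ℕ) (Ω : Set (EuclideanSpace ℝ (Fin N))) (hΩopen : IsOpen Ω)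
    (d : EuclideanSpace ℝ (Fin N) → ℝ)
    (hd : ∀ x, d x = Metric.infDist x (frontier Ω))
    (S : ℝ → Set (EuclideanSpace ℝ (Fin N)))
    (hS : ∀ ε, S ε = {x ∈ Ω | d x < ε})
    (εh : ℝ) (hεh : 0 < εh)
    -- (a) regularity of the distance function near the boundary
    (hdC2 : ContDiffOn ℝ 2 d (S εh))
    (hgrad : ∀ x ∈ S εh, ‖gradient d x‖ = 1)
    (L : ℝ) (hΔd : ∀ x ∈ S εh, |euclidLaplacian d x| ≤ L)
    -- (b) the density ρ
    (ρ : EuclideanSpace ℝ (Fin N) → ℝ)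
    -- (c) the majorant ρbar
    (ρbar : ℝ → ℝ) (hρbarcont : ContinuousOn ρbar (Ioc 0 εh))
    (hρbarpos : ∀ η ∈ Ioc 0 εh, 0 < ρbar η)
    (hmaj : ∀ x ∈ S εh, ρ x ≤ ρbar (d x))
    (hint : IntegrableOn (fun η => η * ρbar η) (Ioc 0 εh) volume) :
    ∃ ε ∈ Ioo 0 εh, ∃ V : EuclideanSpace ℝ (Fin N) → ℝ,
      ContDiffOn ℝ 2 V (S ε) ∧
      (∀ x ∈ S ε, euclidLaplacian V x ≤ -ρ x) ∧
      (∀ x ∈ S ε, 0 < V x) ∧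
      (∀ σ > 0, ∃ δ > 0, ∀ x ∈ S ε, d x < δ → V x < σ) := by
  set ε := εh / 2
  have hε : ε ∈ Ioo 0 εh := ⟨half_pos hεh, half_lt_self hεh⟩
  have hsub : S ε ⊆ S εh := by
    rw [hS, hS]
    exact fun x hx => ⟨hx.1, hx.2.trans hε.2⟩
  have hSopen : IsOpen (S ε) := by
    rw [hS]
    exact hΩopen.inter (isOpen_lt (funext hd ▸ Metric.continuous_infDist_pt _) continuous_const)
  have hd_pos : ∀ x ∈ S εh, 0 < d x := by
    intro x hx
    -- if `∂Ω = ∅` then `d ≡ 0`, which contradicts `‖∇d‖ = 1`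
    have hne : (frontier Ω).Nonempty := by
      by_contra he
      have hzero : d = fun _ => 0 := funext fun y => by simp [hd, not_nonempty_iff_eq_empty.1 he]
      simpa [hzero] using hgrad x hx
    rw [hd]
    exact hΩopen.infDist_frontier_pos hne (hS εh ▸ hx).1
  have hdε : ∀ x ∈ S ε, d x ∈ Ioo 0 ε := fun x hx => ⟨hd_pos x (hsub hx), (hS ε ▸ hx).2⟩
  have hIoc : Ioc 0 ε ⊆ Ioc 0 εh := Ioc_subset_Ioc_right hε.2.le
  obtain ⟨ψ, ψ', hψC2, hψ, hψlim⟩ := exists_barrier_profile L hε.1 (hρbarcont.mono hIoc)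
    (fun r hr => hρbarpos r (hIoc hr)) (hint.mono_set hIoc)
  refine ⟨ε, hε, ψ ∘ d, hψC2.comp (hdC2.mono hsub) hdε, fun x hx => ?_,
    fun x hx => (hψ _ (hdε x hx)).2.2.2, fun σ hσ => ?_⟩
  · obtain ⟨-, hψ'', hψ'pos, -⟩ := hψ _ (hdε x hx)
    rw [euclidLaplacian_comp hSopen (hdC2.mono hsub) (fun y hy => (hψ _ (hdε y hy)).1) hx hψ'',
      hgrad x (hsub hx)]
    have hΔ := mul_le_mul_of_nonneg_left ((le_abs_self _).trans (hΔd x (hsub hx))) hψ'pos.le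
    linarith [hmaj x (hsub hx)]
  · obtain ⟨δ, hδ, hδψ⟩ := mem_nhdsGT_iff_exists_Ioo_subset.1 (hψlim (Iio_mem_nhds hσ))
    exact ⟨δ, hδ, fun x hx hxδ => hδψ ⟨(hdε x hx).1, hxδ⟩⟩

/-- Existence of the barrier `V` on a strip `S^ε` near the boundary (Lemma `lemma0`). -/
theorem stmt_0 (N : ℕ) (hN : 1 ≤ N) (Ω : Set (EuclideanSpace ℝ (Fin N)))
    (hΩopen : IsOpen Ω) (hΩbdd : Bornology.IsBounded Ω)
    (d : EuclideanSpace ℝ (Fin N) → ℝ)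
    (hd : ∀ x, d x = Metric.infDist x (frontier Ω))
    (S : ℝ → Set (EuclideanSpace ℝ (Fin N)))
    (hS : ∀ ε, S ε = {x ∈ Ω | d x < ε})
    (εh : ℝ) (hεh : 0 < εh)
    -- (a) regularity of the distance function near the boundary
    (hdC2 : ContDiffOn ℝ 2 d (S εh))
    (hgrad : ∀ x ∈ S εh, ‖gradient d x‖ = 1)
    (L : ℝ) (hL : 0 < L) (hΔd : ∀ x ∈ S εh, |euclidLaplacian d x| ≤ L)
    -- (b) the density ρ
    (ρ : EuclideanSpace ℝ (Fin N) → ℝ)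
    (hρcont : ContinuousOn ρ Ω) (hρpos : ∀ x ∈ Ω, 0 < ρ x)
    -- (c) the majorant ρbar
    (ρbar : ℝ → ℝ) (hρbarcont : ContinuousOn ρbar (Ioc 0 εh))
    (hρbarpos : ∀ η ∈ Ioc 0 εh, 0 < ρbar η)
    (hmaj : ∀ x ∈ S εh, ρ x ≤ ρbar (d x))
    (hint : IntegrableOn (fun η => η * ρbar η) (Ioc 0 εh) volume) :
    ∃ ε ∈ Ioo 0 εh, ∃ V : EuclideanSpace ℝ (Fin N) → ℝ,
      ContDiffOn ℝ 2 V (S ε) ∧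
      (∀ x ∈ S ε, euclidLaplacian V x ≤ -ρ x) ∧
      (∀ x ∈ S ε, 0 < V x) ∧
      (∀ σ > 0, ∃ δ > 0, ∀ x ∈ S ε, d x < δ → V x < σ) :=
  stmt_0_general N Ω hΩopen d hd S hS εh hεh hdC2 hgrad L hΔd ρ ρbar hρbarcont hρbarpos hmaj hint
end

section
/- Let N ≥ 1, let U ⊆ ℝ^N be open, let ρ : U → ℝ and ρ₀ > 0 satisfy ρ(x) ≥ ρ₀ for all x ∈ U, and let V : U → ℝ be twice continuously differentiable with ΔV(x) ≤ −ρ(x) for all x ∈ U. Let G : ℝ → ℝ be continuously differentiable with G′(s) ≥ α₀ > 0 for all s ∈ ℝ. Fix x₀ ∈ ℝ^N, t₀ ∈ ℝ, real numbers σ, c, reals λ ≥ 0, β ≥ 0, δ > 0, and M with M ≥ 2βN/ρ₀ + 2λδ/α₀. Suppose w : U × ℝ → ℝ satisfies G(w(x,t)) = −M·V(x) − σ + c − λ(t−t₀)² − β‖x−x₀‖² for all (x,t) ∈ U × ℝ. Then for every x ∈ U and every t with |t−t₀| ≤ δ, the function t ↦ w(x,t) is differentiable and ρ(x)·∂ₜw(x,t)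 ≤ Δₓ(G∘w(·,t))(x), where Δₓ(G∘w(·,t)) denotes the Laplacian in x of the map y ↦ G(w(y,t)). -/
/-!
On `U`, `G ∘ w(·, t)` coincides with `-M V + (const) - β ‖· - x₀‖²`, whose Laplacian is
`-M ΔV - 2βN ≥ Mρ - 2βN`. Since `G' ≥ α₀ > 0`, `G` is an order isomorphism of `ℝ`, so
`w(x, ·) = G⁻¹ ∘ (quadratic in t)` is differentiable with
`∂ₜw = -2λ(t - t₀) / G'(w) ≤ 2λδ/α₀` for `|t - t₀| ≤ δ`. The lower bound on `M`, together with
`ρ ≥ ρ₀`, gives `ρ · 2λδ/α₀ ≤ Mρ - 2βN`.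
-/

/-- The Laplacian of `f : ℝ^N → ℝ`: the sum of the second partial derivatives. -/
noncomputable def Laplacian' {N : ℕ} (f : EuclideanSpace ℝ (Fin N) → ℝ)
    (x : EuclideanSpace ℝ (Fin N)) : ℝ :=
  ∑ i : Fin N,
    fderiv ℝ (fun y => fderiv ℝ f y (EuclideanSpace.single i 1)) x (EuclideanSpace.single i 1)

open Filter Topology Laplacian InnerProductSpace

theorem Filter.EventuallyEq.laplacian'_eq {N : ℕ} {f g : EuclideanSpace ℝ (Fin N) → ℝ}
    {x : EuclideanSpace ℝ (Fin N)} (h : f =ᶠ[𝓝 x] g) : Laplacian' f x = Laplacian' g x := by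
  refine Finset.sum_congr rfl fun i _ => ?_
  have hi : (fun y => fderiv ℝ f y (EuclideanSpace.single i 1)) =ᶠ[𝓝 x]
      fun y => fderiv ℝ g y (EuclideanSpace.single i 1) :=
    h.fderiv.fun_comp fun L : EuclideanSpace ℝ (Fin N) →L[ℝ] ℝ => L (EuclideanSpace.single i 1)
  rw [hi.fderiv_eq]

theorem ContDiffAt.laplacian'_eq_laplacian {N : ℕ} {f : EuclideanSpace ℝ (Fin N) → ℝ}
    {x : EuclideanSpace ℝ (Fin N)} (hf : ContDiffAt ℝ 2 f x) : Laplacian' f x = Δ f x := by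
  have hf' : DifferentiableAt ℝ (fderiv ℝ f) x :=
    (hf.fderiv_right (m := 1) (by norm_num)).differentiableAt one_ne_zero
  rw [laplacian_eq_iteratedFDeriv_orthonormalBasis f (EuclideanSpace.basisFun (Fin N) ℝ)]
  refine Finset.sum_congr rfl fun i _ => ?_
  rw [iteratedFDeriv_two_apply, fderiv_clm_apply hf' (differentiableAt_const _)]
  simp

theorem laplacian_norm_sub_sq {E : Type*} [NormedAddCommGroup E] [InnerProductSpace ℝ E]
    [FiniteDimensional ℝ E] (x₀ x : E) :
    Δ (fun y => ‖y - x₀‖ ^ 2) x = 2 * Module.finrank ℝ E := by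
  have hD : fderiv ℝ (fun y => ‖y - x₀‖ ^ 2) = fun y => 2 • innerSL ℝ (y - x₀) := by
    ext1 y
    simpa using ((hasFDerivAt_id y).sub_const x₀).norm_sq.fderiv
  have hD2 : ∀ v, fderiv ℝ (fderiv ℝ (fun y => ‖y - x₀‖ ^ 2)) x v v = 2 * ‖v‖ ^ 2 := by
    have := ((2 • innerSL ℝ (E := E)).hasFDerivAt (x := x)).sub_const (2 • innerSL ℝ x₀)
    rw [hD, (this.congr_of_eventuallyEq (Eventually.of_forall fun y => ?_)).fderiv]
    · intro v
      change 2 • inner ℝ v v = _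
      rw [nsmul_eq_mul, real_inner_self_eq_norm_sq, Nat.cast_ofNat]
    · simp [smul_sub]
  rw [laplacian_eq_iteratedFDeriv_orthonormalBasis _ (stdOrthonormalBasis ℝ E)]
  simp [iteratedFDeriv_two_apply, hD2, mul_comm]

theorem ContDiffAt.laplacian_mul_add_sub_mul_norm_sub_sq {E : Type*} [NormedAddCommGroup E]
    [InnerProductSpace ℝ E] [FiniteDimensional ℝ E] {f : E → ℝ} {x : E} (hf : ContDiffAt ℝ 2 f x)
    (a C β : ℝ) (x₀ : E) :
    Δ (fun y => a * f y + C - β * ‖y - x₀‖ ^ 2) x = a * Δ f x - 2 * β * Module.finrank ℝ E := by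
  have hq : ContDiffAt ℝ 2 (fun y => ‖y - x₀‖ ^ 2) x :=
    ((contDiff_norm_sq ℝ).comp (contDiff_id.sub contDiff_const)).contDiffAt
  have hsplit : (fun y => a * f y + C - β * ‖y - x₀‖ ^ 2) =
      (a • f + fun _ => C) - β • fun y => ‖y - x₀‖ ^ 2 := rfl
  have haf : ContDiffAt ℝ 2 (a • f) x := hf.const_smul a
  have hafC : ContDiffAt ℝ 2 (a • f + fun _ => C) x := haf.add contDiffAt_const
  have hβq : ContDiffAt ℝ 2 (β • fun y => ‖y - x₀‖ ^ 2) x := hq.const_smul β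
  rw [hsplit, hafC.laplacian_sub hβq, haf.laplacian_add contDiffAt_const, laplacian_smul a hf,
    laplacian_smul β hq, laplacian_const, laplacian_norm_sub_sq]
  simp only [Pi.zero_apply, smul_eq_mul]
  ring

theorem surjective_of_le_deriv {G : ℝ → ℝ} {α₀ : ℝ} (hα₀ : 0 < α₀)
    (hG : Differentiable ℝ G) (hG' : ∀ s, α₀ ≤ deriv G s) : Function.Surjective G := by
  have hgrow := mul_sub_le_image_sub_of_le_deriv hG hG'
  refine hG.continuous.surjective ?_ ?_
  · refine tendsto_atTop_mono' _ ((eventually_ge_atTop 0).mono fun s hs => ?_)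
      (tendsto_atTop_add_const_left _ (G 0) (tendsto_id.const_mul_atTop hα₀))
    exact (by linarith [hgrow hs] : G 0 + α₀ * s ≤ G s)
  · refine tendsto_atBot_mono' _ ((eventually_le_atBot 0).mono fun s hs => ?_)
      (tendsto_atBot_add_const_left _ (G 0) (tendsto_id.const_mul_atBot hα₀))
    exact (by linarith [hgrow hs] : G s ≤ G 0 + α₀ * s)

theorem hasDerivAt_of_comp_eq_of_le_deriv {G u F : ℝ → ℝ} {α₀ F' t : ℝ} (hα₀ : 0 < α₀)
    (hG : Differentiable ℝ G) (hG' : ∀ s, α₀ ≤ deriv G s) (hGu : ∀ s, G (u s) = F s)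
    (hF : HasDerivAt F F' t) : HasDerivAt u ((deriv G (u t))⁻¹ * F') t := by
  have hmono : StrictMono G := strictMono_of_deriv_pos fun s => hα₀.trans_le (hG' s)
  let e := hmono.orderIsoOfSurjective G (surjective_of_le_deriv hα₀ hG hG')
  have hu : u = e.symm ∘ F := funext fun s => hmono.injective <| by
    rw [hGu, Function.comp_apply]
    exact (e.apply_symm_apply (F s)).symm
  have he : HasDerivAt e.symm (deriv G (u t))⁻¹ (F t) := by
    refine .of_local_left_inverse e.symm.continuous.continuousAt ?_
      (hα₀.trans_le (hG' _)).ne' (.of_forall e.apply_symm_apply)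
    rw [hu]
    exact (hG _).hasDerivAt
  exact (he.comp t hF).congr_of_eventuallyEq (.of_forall (congrFun hu))

theorem ContDiffAt.laplacian'_mul_add_sub_mul_norm_sub_sq {N : ℕ}
    {f : EuclideanSpace ℝ (Fin N) → ℝ} {x : EuclideanSpace ℝ (Fin N)} (hf : ContDiffAt ℝ 2 f x)
    (a C β : ℝ) (x₀ : EuclideanSpace ℝ (Fin N)) :
    Laplacian' (fun y => a * f y + C - β * ‖y - x₀‖ ^ 2) x = a * Laplacian' f x - 2 * β * N := by
  have hq : ContDiffAt ℝ 2 (fun y => ‖y - x₀‖ ^ 2) x :=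
    ((contDiff_norm_sq ℝ).comp (contDiff_id.sub contDiff_const)).contDiffAt
  have h : ContDiffAt ℝ 2 (fun y => a * f y + C - β * ‖y - x₀‖ ^ 2) x :=
    ((contDiffAt_const.mul hf).add contDiffAt_const).sub (contDiffAt_const.mul hq)
  rw [h.laplacian'_eq_laplacian, hf.laplacian'_eq_laplacian,
    hf.laplacian_mul_add_sub_mul_norm_sub_sq, finrank_euclideanSpace_fin]

theorem inv_mul_neg_two_mul_sub_le {α₀ g lam t t₀ δ : ℝ} (hα₀ : 0 < α₀) (hg : α₀ ≤ g)
    (hlam : 0 ≤ lam) (ht : |t - t₀| ≤ δ) :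
    g⁻¹ * -(lam * (2 * (t - t₀))) ≤ 2 * lam * δ / α₀ :=
  calc g⁻¹ * -(lam * (2 * (t - t₀)))
      ≤ g⁻¹ * (2 * lam * δ) := by
        gcongr
        · exact inv_nonneg.2 (hα₀.le.trans hg)
        · nlinarith [neg_le_abs (t - t₀)]
    _ ≤ α₀⁻¹ * (2 * lam * δ) := by
        have : 0 ≤ δ := (abs_nonneg _).trans ht
        gcongr
    _ = 2 * lam * δ / α₀ := inv_mul_eq_div _ _

theorem mul_le_mul_sub_of_div_add_le {ρ ρ₀ A B M : ℝ} (hρ₀ : 0 < ρ₀) (hρ : ρ₀ ≤ ρ)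
    (hB : 0 ≤ B) (hM : B / ρ₀ + A ≤ M) : ρ * A ≤ M * ρ - B :=
  calc ρ * A ≤ ρ * (M - B / ρ₀) := by
        have : 0 ≤ ρ := hρ₀.le.trans hρ
        gcongr
        linarith
    _ = M * ρ - B * (ρ / ρ₀) := by ring
    _ ≤ M * ρ - B := by
        linarith [le_mul_of_one_le_right hB ((one_le_div hρ₀).2 hρ)]

theorem stmt_4_general (N : ℕ) (U : Set (EuclideanSpace ℝ (Fin N))) (hU : IsOpen U)
    (ρ : EuclideanSpace ℝ (Fin N) → ℝ) (ρ₀ : ℝ) (hρ₀ : 0 < ρ₀)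
    (hρ : ∀ x ∈ U, ρ₀ ≤ ρ x)
    (V : EuclideanSpace ℝ (Fin N) → ℝ) (hV : ContDiffOn ℝ 2 V U)
    (hΔV : ∀ x ∈ U, Laplacian' V x ≤ -ρ x)
    (G : ℝ → ℝ) (hG : ContDiff ℝ 1 G)
    (α₀ : ℝ) (hα₀ : 0 < α₀) (hG' : ∀ s : ℝ, α₀ ≤ deriv G s)
    (x₀ : EuclideanSpace ℝ (Fin N)) (t₀ σ c lam β δ M : ℝ)
    (hlam : 0 ≤ lam) (hβ : 0 ≤ β)
    (hM : 2 * β * N / ρ₀ + 2 * lam * δ / α₀ ≤ M)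
    (w : EuclideanSpace ℝ (Fin N) → ℝ → ℝ)
    (hw : ∀ x ∈ U, ∀ t : ℝ,
      G (w x t) = -M * V x - σ + c - lam * (t - t₀) ^ 2 - β * ‖x - x₀‖ ^ 2) :
    ∀ x ∈ U, ∀ t : ℝ, |t - t₀| ≤ δ →
      DifferentiableAt ℝ (w x) t ∧
      ρ x * deriv (w x) t ≤ Laplacian' (fun y => G (w y t)) x := by
  intro x hx t ht
  have hF : HasDerivAt (fun s => -M * V x - σ + c - lam * (s - t₀) ^ 2 - β * ‖x - x₀‖ ^ 2)
      (-(lam * (2 * (t - t₀)))) t := by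
    simpa using ((((hasDerivAt_id t).sub_const t₀).pow 2).const_mul lam).const_sub
      (-M * V x - σ + c) |>.sub_const (β * ‖x - x₀‖ ^ 2)
  have hwt := hasDerivAt_of_comp_eq_of_le_deriv hα₀ (hG.differentiable one_ne_zero) hG' (hw x hx) hF
  refine ⟨hwt.differentiableAt, ?_⟩
  have hlap : Laplacian' (fun y => G (w y t)) x = -M * Laplacian' V x - 2 * β * N := by
    have hev : (fun y => G (w y t)) =ᶠ[𝓝 x]
        fun y => -M * V y + (-σ + c - lam * (t - t₀) ^ 2) - β * ‖y - x₀‖ ^ 2 :=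
      eventually_of_mem (hU.mem_nhds hx) fun y hy => by dsimp only; rw [hw y hy t]; ring
    rw [hev.laplacian'_eq, (hV.contDiffAt (hU.mem_nhds hx)).laplacian'_mul_add_sub_mul_norm_sub_sq]
  have hρx : 0 ≤ ρ x := hρ₀.le.trans (hρ x hx)
  have hδ : 0 ≤ δ := (abs_nonneg _).trans ht
  have hM₀ : 0 ≤ M := le_trans (by positivity) hM
  rw [hwt.deriv, hlap]
  calc ρ x * ((deriv G (w x t))⁻¹ * -(lam * (2 * (t - t₀))))
      ≤ ρ x * (2 * lam * δ / α₀) := by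
        gcongr
        exact inv_mul_neg_two_mul_sub_le hα₀ (hG' _) hlam ht
    _ ≤ M * ρ x - 2 * β * N := mul_le_mul_sub_of_div_add_le hρ₀ (hρ x hx) (by positivity) hM
    _ ≤ -M * Laplacian' V x - 2 * β * N := by
        linarith [mul_le_mul_of_nonneg_left (hΔV x hx) hM₀]

/-- The lower barrier `w = G⁻¹[-MV - σ + c - λ(t-t₀)² - β‖x-x₀‖²]` is a pointwise
subsolution of `ρ ∂ₜ u = Δ[G(u)]` when `inf ρ ≥ ρ₀ > 0`. -/
theorem stmt_4 (N : ℕ) (hN : 1 ≤ N) (U : Set (EuclideanSpace ℝ (Fin N))) (hU : IsOpen U)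
    (ρ : EuclideanSpace ℝ (Fin N) → ℝ) (ρ₀ : ℝ) (hρ₀ : 0 < ρ₀)
    (hρ : ∀ x ∈ U, ρ₀ ≤ ρ x)
    (V : EuclideanSpace ℝ (Fin N) → ℝ) (hV : ContDiffOn ℝ 2 V U)
    (hΔV : ∀ x ∈ U, Laplacian' V x ≤ -ρ x)
    (G : ℝ → ℝ) (hG : ContDiff ℝ 1 G)
    (α₀ : ℝ) (hα₀ : 0 < α₀) (hG' : ∀ s : ℝ, α₀ ≤ deriv G s)
    (x₀ : EuclideanSpace ℝ (Fin N)) (t₀ σ c lam β δ M : ℝ)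
    (hlam : 0 ≤ lam) (hβ : 0 ≤ β) (hδ : 0 < δ)
    (hM : 2 * β * N / ρ₀ + 2 * lam * δ / α₀ ≤ M)
    (w : EuclideanSpace ℝ (Fin N) → ℝ → ℝ)
    (hw : ∀ x ∈ U, ∀ t : ℝ,
      G (w x t) = -M * V x - σ + c - lam * (t - t₀) ^ 2 - β * ‖x - x₀‖ ^ 2) :
    ∀ x ∈ U, ∀ t : ℝ, |t - t₀| ≤ δ →
      DifferentiableAt ℝ (w x) t ∧
      ρ x * deriv (w x) t ≤ Laplacian' (fun y => G (w y t)) x :=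
  stmt_4_general N U hU ρ ρ₀ hρ₀ hρ V hV hΔV G hG α₀ hα₀ hG' x₀ t₀ σ c lam β δ M hlam hβ hM w hw
end

section
/- Let N ≥ 1, let U ⊆ ℝ^N be open, let ρ : U → ℝ and P > 0 satisfy 0 ≤ ρ(x) ≤ P for all x ∈ U, and let h : U → ℝ be twice continuously differentiable with Δh(x) ≤ −1 for all x ∈ U. Let G : ℝ → ℝ be continuously differentiable with G′(s) ≥ α₀ > 0 for all s ∈ ℝ. Fix t₀ ∈ ℝ, real numbers σ, c, reals λ ≥ 0, δ > 0, and M with M ≥ 2λδP/α₀. Suppose w : U × ℝ → ℝ satisfies G(w(x,t)) = −M·h(x) − σ + c − λ(t−t₀)² for all (x,t) ∈ U × ℝ. Then for every x ∈ U and every t with |t−t₀| ≤ δ, the function t ↦ w(x,t) is differentiable and ρ(x)·∂ₜw(x,t) ≤ Δₓ(G∘w(·,t))(x), where Δₓ(G∘w(·,t)) denotes the Laplacian in x of the map y ↦ G(w(y,t)). -/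
/-!
Since `G' ≥ α₀ > 0`, `G` is an increasing bijection of `ℝ` with differentiable inverse, so
`w(x, ·) = G⁻¹(-M h(x) - σ + c - λ(· - t₀)²)` is differentiable with
`∂ₜw = -2λ(t - t₀) / G'(w)`, hence `ρ ∂ₜw ≤ 2λδP / α₀ ≤ M` for `|t - t₀| ≤ δ`.
In `x`, `G(w(·, t))` coincides near each point of the open set `U` with an affine function
of `h`, so its Laplacian is `-M Δh ≥ M`.
-/

/-- The Laplacian of `f : ℝ^N → ℝ`: the sum of the second partial derivatives. -/
noncomputable def LaplacianN {N : ℕ} (f : EuclideanSpace ℝ (Fin N) → ℝ)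
    (x : EuclideanSpace ℝ (Fin N)) : ℝ :=
  ∑ i : Fin N,
    fderiv ℝ (fun y => fderiv ℝ f y (EuclideanSpace.single i 1)) x (EuclideanSpace.single i 1)

open Filter Topology

section LaplacianN

variable {N : ℕ} {f g : EuclideanSpace ℝ (Fin N) → ℝ} {x : EuclideanSpace ℝ (Fin N)}

theorem Filter.EventuallyEq.laplacianN_eq (hfg : f =ᶠ[𝓝 x] g) :
    LaplacianN f x = LaplacianN g x := by
  unfold LaplacianN
  refine Finset.sum_congr rfl fun i _ => ?_
  congr 1
  exact (hfg.fderiv.fun_comp fun L => L (EuclideanSpace.single i 1)).fderiv_eq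

/-- No differentiability of `f` is needed: `fderiv` commutes with scalar multiplication
everywhere, both sides being `0` where `f` is not differentiable. -/
theorem laplacianN_const_mul_add_const (a b : ℝ) :
    LaplacianN (fun y => a * f y + b) x = a * LaplacianN f x := by
  have hf : fderiv ℝ (fun y => a * f y + b) = a • fderiv ℝ f := by
    ext1 y
    rw [fderiv_add_const, ← fderiv_const_smul_field]
    rfl
  unfold LaplacianN
  rw [Finset.mul_sum, hf]
  refine Finset.sum_congr rfl fun i _ => ?_
  exact DFunLike.congr_fun (congrFun (fderiv_const_smul_field
    (f := fun y => fderiv ℝ f y (EuclideanSpace.single i 1)) a) x) _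

end LaplacianN

section UniformlyIncreasing

variable {G : ℝ → ℝ} {α : ℝ}

theorem differentiable_of_pos_le_deriv (hα : 0 < α) (hG : ∀ s, α ≤ deriv G s) :
    Differentiable ℝ G :=
  fun s => differentiableAt_of_deriv_ne_zero (hα.trans_le (hG s)).ne'

theorem surjective_of_pos_le_deriv (hα : 0 < α) (hG : ∀ s, α ≤ deriv G s) :
    Function.Surjective G := by
  have hGd := differentiable_of_pos_le_deriv hα hG
  intro y
  set r := |y - G 0| / α
  have hr : 0 ≤ r := by positivity
  have hαr : α * r = |y - G 0| := mul_div_cancel₀ _ hα.ne'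
  have hlow := mul_sub_le_image_sub_of_le_deriv hGd hG (neg_nonpos.2 hr)
  have hup := mul_sub_le_image_sub_of_le_deriv hGd hG hr
  refine intermediate_value_univ (-r) r hGd.continuous ⟨?_, ?_⟩ <;>
    linarith [le_abs_self (y - G 0), neg_abs_le (y - G 0)]

theorem hasDerivAt_of_comp_eq_of_pos_le_deriv (hα : 0 < α) (hG : ∀ s, α ≤ deriv G s)
    {u F : ℝ → ℝ} {F' t : ℝ} (hu : ∀ s, G (u s) = F s) (hF : HasDerivAt F F' t) :
    HasDerivAt u ((deriv G (u t))⁻¹ * F') t := by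
  have hGd := differentiable_of_pos_le_deriv hα hG
  have hmono : StrictMono G := strictMono_of_deriv_pos fun s => hα.trans_le (hG s)
  let e := hmono.orderIsoOfSurjective G (surjective_of_pos_le_deriv hα hG)
  have he : ⇑e = G := hmono.coe_orderIsoOfSurjective G _
  have hue : u = e.symm ∘ F := funext fun s => by
    rw [Function.comp_apply, ← hu s, ← he, e.symm_apply_apply]
  have hsymm : HasDerivAt e.symm (deriv G (u t))⁻¹ (F t) := by
    refine HasDerivAt.of_local_left_inverse (f := G) e.symm.continuous.continuousAt ?_
      (hα.trans_le (hG _)).ne' (Eventually.of_forall fun y => by rw [← he, e.apply_symm_apply])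
    rw [hue]
    exact (hGd _).hasDerivAt
  simpa only [← hue] using hsymm.comp t hF

end UniformlyIncreasing

theorem density_mul_timeDeriv_le_neg_mul_laplacian {r P g α lam τ δ M L : ℝ}
    (hr : 0 ≤ r) (hrP : r ≤ P) (hα : 0 < α) (hαg : α ≤ g) (hlam : 0 ≤ lam)
    (hτ : |τ| ≤ δ) (hM : 2 * lam * δ * P / α ≤ M) (hL : L ≤ -1) :
    r * (g⁻¹ * -(lam * (2 * τ))) ≤ -M * L := by
  have hg : 0 < g := hα.trans_le hαg
  have hδ : 0 ≤ δ := (abs_nonneg τ).trans hτ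
  have hbound : 0 ≤ 2 * lam * δ * P :=
    mul_nonneg (mul_nonneg (mul_nonneg zero_le_two hlam) hδ) (hr.trans hrP)
  calc r * (g⁻¹ * -(lam * (2 * τ))) = r * (2 * lam * -τ) / g := by field_simp
    _ ≤ r * (2 * lam * δ) / g := by gcongr; exact (neg_le_abs τ).trans hτ
    _ ≤ 2 * lam * δ * P / g := by rw [mul_comm r]; gcongr
    _ ≤ 2 * lam * δ * P / α := div_le_div_of_nonneg_left hbound hα hαg
    _ ≤ M := hM
    _ ≤ -M * L := by nlinarith [(div_nonneg hbound hα.le).trans hM]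

theorem stmt_6_general (N : ℕ) (U : Set (EuclideanSpace ℝ (Fin N))) (hU : IsOpen U)
    (ρ : EuclideanSpace ℝ (Fin N) → ℝ) (P : ℝ)
    (hρ : ∀ x ∈ U, 0 ≤ ρ x ∧ ρ x ≤ P)
    (h : EuclideanSpace ℝ (Fin N) → ℝ)
    (hΔh : ∀ x ∈ U, LaplacianN h x ≤ -1)
    (G : ℝ → ℝ)
    (α₀ : ℝ) (hα₀ : 0 < α₀) (hG' : ∀ s : ℝ, α₀ ≤ deriv G s)
    (t₀ σ c lam δ M : ℝ) (hlam : 0 ≤ lam)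
    (hM : 2 * lam * δ * P / α₀ ≤ M)
    (w : EuclideanSpace ℝ (Fin N) → ℝ → ℝ)
    (hw : ∀ x ∈ U, ∀ t : ℝ,
      G (w x t) = -M * h x - σ + c - lam * (t - t₀) ^ 2) :
    ∀ x ∈ U, ∀ t : ℝ, |t - t₀| ≤ δ →
      DifferentiableAt ℝ (w x) t ∧
      ρ x * deriv (w x) t ≤ LaplacianN (fun y => G (w y t)) x := by
  intro x hx t ht
  have hF : HasDerivAt (fun s => -M * h x - σ + c - lam * (s - t₀) ^ 2)
      (-(lam * (2 * (t - t₀)))) t := by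
    simpa using ((((hasDerivAt_id t).sub_const t₀).fun_pow 2).const_mul lam).const_sub
      (-M * h x - σ + c)
  have hwt := hasDerivAt_of_comp_eq_of_pos_le_deriv hα₀ hG' (hw x hx) hF
  have hΔ : LaplacianN (fun y => G (w y t)) x = -M * LaplacianN h x := by
    rw [(eventuallyEq_of_mem (hU.mem_nhds hx) fun y hy => hw y hy t).laplacianN_eq,
      ← laplacianN_const_mul_add_const (-M) (-σ + c - lam * (t - t₀) ^ 2)]
    congr! 2 with y
    ring
  refine ⟨hwt.differentiableAt, ?_⟩
  rw [hwt.deriv, hΔ]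
  exact density_mul_timeDeriv_le_neg_mul_laplacian (hρ x hx).1 (hρ x hx).2 hα₀ (hG' _) hlam ht
    hM (hΔh x hx)

/-- The lower barrier `w = G⁻¹[-Mh - σ + c - λ(t-t₀)²]` built from the Miller function `h`
is a pointwise subsolution of `ρ ∂ₜ u = Δ[G(u)]` when `0 ≤ ρ ≤ P`. -/
theorem stmt_6 (N : ℕ) (hN : 1 ≤ N) (U : Set (EuclideanSpace ℝ (Fin N))) (hU : IsOpen U)
    (ρ : EuclideanSpace ℝ (Fin N) → ℝ) (P : ℝ) (hP : 0 < P)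
    (hρ : ∀ x ∈ U, 0 ≤ ρ x ∧ ρ x ≤ P)
    (h : EuclideanSpace ℝ (Fin N) → ℝ) (hh : ContDiffOn ℝ 2 h U)
    (hΔh : ∀ x ∈ U, LaplacianN h x ≤ -1)
    (G : ℝ → ℝ) (hG : ContDiff ℝ 1 G)
    (α₀ : ℝ) (hα₀ : 0 < α₀) (hG' : ∀ s : ℝ, α₀ ≤ deriv G s)
    (t₀ σ c lam δ M : ℝ) (hlam : 0 ≤ lam) (hδ : 0 < δ)
    (hM : 2 * lam * δ * P / α₀ ≤ M)
    (w : EuclideanSpace ℝ (Fin N) → ℝ → ℝ)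
    (hw : ∀ x ∈ U, ∀ t : ℝ,
      G (w x t) = -M * h x - σ + c - lam * (t - t₀) ^ 2) :
    ∀ x ∈ U, ∀ t : ℝ, |t - t₀| ≤ δ →
      DifferentiableAt ℝ (w x) t ∧
      ρ x * deriv (w x) t ≤ LaplacianN (fun y => G (w y t)) x :=
  stmt_6_general N U hU ρ P hρ h hΔh G α₀ hα₀ hG' t₀ σ c lam δ M hlam hM w hw
end
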